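/- arXiv:2106.05031 — 2 statements merged into one kernel-verified Lean document; each statement's English description precedes it below -/
import Mathlib

section
/- Sauer's lemma: if a class G of subsets of a set Z has VC dimension at most v, then for any ℓ points z_1,…,z_ℓ in Z, the number of distinct subsets of {z_1,…,z_ℓ} of the form {z_1,…,z_ℓ} ∩ G with G ∈ G is at most Σ_{j=0}^{v} C(ℓ, j), which in turn is at most (ℓe/v)^v when ℓ ≥ v ≥ 1. -/
/-!
The traces of `𝒢` on `S = {z₁, …, z_ℓ}` form a family `𝒜` of subsets of `S`, and a set shattered
by `𝒜` is shattered by `𝒢`, hence has at most `v` elements. By Pajor's form of the Sauer–Shelah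
lemma, `𝒜` has at most as many members as it shatters sets, i.e. at most `∑_{j ≤ v} C(ℓ, j)`.
For the analytic bound, with `x = v / ℓ ≤ 1` we have
`x ^ v ∑_{j ≤ v} C(ℓ, j) ≤ ∑_j C(ℓ, j) x ^ j = (1 + x) ^ ℓ ≤ exp (x ℓ) = exp v`.
-/

open Finset

lemma Finset.card_le_sum_range_choose_of_shatters_card_le {α : Type*} [DecidableEq α]
    {𝒜 : Finset (Finset α)} {S : Finset α} {v : ℕ} (h𝒜S : ∀ t ∈ 𝒜, t ⊆ S)
    (hv : ∀ s, 𝒜.Shatters s → #s ≤ v) :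
    #𝒜 ≤ ∑ j ∈ range (v + 1), (#S).choose j := by
  refine (card_le_card_shatterer 𝒜).trans ?_
  simp_rw [← card_powersetCard]
  refine (card_le_card fun s hs ↦ mem_biUnion.2 ⟨#s, ?_⟩).trans card_biUnion_le
  replace hs := mem_shatterer.1 hs
  obtain ⟨t, ht, hst⟩ := hs.exists_superset
  exact ⟨mem_range.2 (Nat.lt_succ_of_le (hv s hs)),
    mem_powersetCard.2 ⟨hst.trans (h𝒜S t ht), rfl⟩⟩

namespace Set

variable {Z : Type*}

open Classical in
noncomputable def traceFinset (𝒢 : Set (Set Z)) (S : Finset Z) : Finset (Finset Z) :=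
  S.powerset.filter fun A ↦ ∃ G ∈ 𝒢, (S : Set Z) ∩ G = A

variable {𝒢 : Set (Set Z)} {S A : Finset Z}

lemma mem_traceFinset : A ∈ traceFinset 𝒢 S ↔ A ⊆ S ∧ ∃ G ∈ 𝒢, (S : Set Z) ∩ G = A := by
  classical
  rw [traceFinset, Finset.mem_filter, Finset.mem_powerset]

lemma subset_of_mem_traceFinset (hA : A ∈ traceFinset 𝒢 S) : A ⊆ S :=
  (mem_traceFinset.1 hA).1

lemma ncard_trace_eq_card_traceFinset (𝒢 : Set (Set Z)) (S : Finset Z) :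
    {A : Set Z | ∃ G ∈ 𝒢, A = (S : Set Z) ∩ G}.ncard = #(traceFinset 𝒢 S) := by
  classical
  have : {A : Set Z | ∃ G ∈ 𝒢, A = (S : Set Z) ∩ G} =
      (↑) '' (traceFinset 𝒢 S : Set (Finset Z)) := by
    ext A
    simp only [mem_ofPred_eq, mem_image, Finset.mem_coe, mem_traceFinset]
    constructor
    · rintro ⟨G, hG, rfl⟩
      refine ⟨S.filter (· ∈ G), ⟨filter_subset _ _, G, hG, ?_⟩, ?_⟩ <;> ext <;> simp
    · rintro ⟨B, ⟨-, G, hG, hBG⟩, rfl⟩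
      exact ⟨G, hG, hBG.symm⟩
  rw [this, ncard_image_of_injective _ Finset.coe_injective, ncard_coe_finset]

lemma shatters_of_traceFinset_shatters [DecidableEq Z] {s : Finset Z}
    (hs : (traceFinset 𝒢 S).Shatters s) :
    ∀ B ⊆ s, ∃ G ∈ 𝒢, (s : Set Z) ∩ G = B := by
  intro B hB
  obtain ⟨u, hu, hsu⟩ := hs hB
  obtain ⟨-, G, hG, hSG⟩ := mem_traceFinset.1 hu
  obtain ⟨t, ht, hst⟩ := hs.exists_superset
  have hsS : (s : Set Z) ⊆ S := Finset.coe_subset.2 (hst.trans (subset_of_mem_traceFinset ht))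
  refine ⟨G, hG, ?_⟩
  rw [← inter_eq_left.2 hsS, inter_assoc, hSG, ← Finset.coe_inter, hsu]

end Set

lemma pow_mul_sum_range_choose_le_one_add_pow {R : Type*} [CommSemiring R] [PartialOrder R]
    [IsOrderedRing R] {x : R} (hx₀ : 0 ≤ x) (hx₁ : x ≤ 1) {v ℓ : ℕ} (hvl : v ≤ ℓ) :
    x ^ v * ∑ j ∈ range (v + 1), (ℓ.choose j : R) ≤ (1 + x) ^ ℓ := by
  calc x ^ v * ∑ j ∈ range (v + 1), (ℓ.choose j : R)
      ≤ ∑ j ∈ range (v + 1), x ^ j * ℓ.choose j := by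
        rw [mul_sum]
        refine sum_le_sum fun j hj ↦ mul_le_mul_of_nonneg_right ?_ (by positivity)
        exact pow_le_pow_of_le_one hx₀ hx₁ (Nat.lt_succ_iff.mp (mem_range.mp hj))
    _ ≤ ∑ j ∈ range (ℓ + 1), x ^ j * ℓ.choose j :=
        sum_le_sum_of_subset_of_nonneg (range_subset_range.mpr (by omega))
          fun _ _ _ ↦ by positivity
    _ = (1 + x) ^ ℓ := by
        rw [add_comm (1 : R) x, add_pow]
        simp

lemma sum_range_choose_le_mul_exp_div_pow {v ℓ : ℕ} (hvl : v ≤ ℓ) :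
    ((∑ j ∈ range (v + 1), ℓ.choose j : ℕ) : ℝ) ≤ (ℓ * Real.exp 1 / v) ^ v := by
  rcases Nat.eq_zero_or_pos v with rfl | hv
  · simp
  have hℓ : (0 : ℝ) < ℓ := by exact_mod_cast hv.trans_le hvl
  set x : ℝ := v / ℓ
  have hx₀ : 0 < x := by positivity
  have hx₁ : x ≤ 1 := div_le_one_of_le₀ (by exact_mod_cast hvl) hℓ.le
  have hxℓ : x * ℓ = v := div_mul_cancel₀ _ hℓ.ne'
  have hexp : (1 + x) ^ ℓ ≤ Real.exp v := calc
    (1 + x) ^ ℓ ≤ Real.exp x ^ ℓ := by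
      gcongr; linarith [Real.add_one_le_exp x]
    _ = Real.exp v := by rw [← Real.exp_nat_mul, mul_comm, hxℓ]
  have hbase : (ℓ : ℝ) * Real.exp 1 / v = Real.exp 1 / x := by
    rw [← hxℓ]; field_simp
  rw [hbase, div_pow, ← Real.exp_nat_mul, mul_one, le_div_iff₀ (by positivity), mul_comm]
  push_cast
  exact (pow_mul_sum_range_choose_le_one_add_pow hx₀.le hx₁ hvl).trans hexp

/-- Sauer's lemma: growth function bound for a class of subsets with VC dimension at most `v`. -/
theorem stmt3 {Z : Type*} (𝒢 : Set (Set Z)) (v ℓ : ℕ)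
    (hVC : ∀ S : Finset Z,
      (∀ B ⊆ S, ∃ G ∈ 𝒢, (S : Set Z) ∩ G = (B : Set Z)) → S.card ≤ v)
    (z : Fin ℓ → Z) :
    ({A : Set Z | ∃ G ∈ 𝒢, A = Set.range z ∩ G}).ncard
        ≤ ∑ j ∈ Finset.range (v + 1), ℓ.choose j
    ∧ (1 ≤ v → v ≤ ℓ →
        ((∑ j ∈ Finset.range (v + 1), ℓ.choose j : ℕ) : ℝ)
          ≤ ((ℓ : ℝ) * Real.exp 1 / v) ^ v) := by
  classical
  refine ⟨?_, fun _ hvl ↦ sum_range_choose_le_mul_exp_div_pow hvl⟩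
  have hrange : Set.range z = ↑(univ.image z) := by simp
  rw [hrange, Set.ncard_trace_eq_card_traceFinset]
  calc #(Set.traceFinset 𝒢 (univ.image z))
      ≤ ∑ j ∈ range (v + 1), (#(univ.image z)).choose j :=
        card_le_sum_range_choose_of_shatters_card_le (fun _ ↦ Set.subset_of_mem_traceFinset)
          fun s hs ↦ hVC s (Set.shatters_of_traceFinset_shatters hs)
    _ ≤ ∑ j ∈ range (v + 1), ℓ.choose j :=
        sum_le_sum fun j _ ↦ Nat.choose_le_choose j (card_image_le.trans (by simp))
end

section
/- Backward-induction recursion bound: let ΔQ_t and ΔQ_t† be nonnegative real numbers for t = 1,…,T, and let κ_1,…,κ_{T−1} ∈ (0,1]. Suppose ΔQ_T = ΔQ_T† and for every k = 1,…,T−1, ΔQ_{T−k} ≤ Σ_{s=T−k+1}^{T} (1/∏_{ℓ=T−k}^{s−1} κ_ℓ)·ΔQ_s + ΔQ_{T−k}†. Then ΔQ_1 ≤ ΔQ_1† + Σ_{s=1}^{T−1} (2^{s−1}/∏_{t=1}^{s} κ_t)·ΔQ_{s+1}†. -/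
/-!
Write `S j = ∑_{s=j+1}^{T} (κ_j ⋯ κ_{s-1})⁻¹ Q_s`, so that the hypotheses say `Q_t ≤ S_t + Q†_t`
for `1 ≤ t ≤ T` (with `S_T = 0`). Peeling off the term `s = j + 1` gives
`S_j = κ_j⁻¹ (Q_{j+1} + S_{j+1}) ≤ κ_j⁻¹ (Q†_{j+1} + 2 S_{j+1})`, and the right-hand side of the
theorem satisfies the same recursion with equality, so backward induction from `j = T` bounds
`S_1`, and hence `Q_1 ≤ S_1 + Q†_1`.
-/

open Finset

section BackwardRecursion

variable {K : Type*} [Field K]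

def discountedTail (κ Q : ℕ → K) (T j : ℕ) : K :=
  ∑ s ∈ Icc (j + 1) T, (∏ ℓ ∈ Icc j (s - 1), κ ℓ)⁻¹ * Q s

def doublingSum (κ Q : ℕ → K) (n j : ℕ) : K :=
  ∑ s ∈ Icc j n, (2 ^ (s - j) / ∏ t ∈ Icc j s, κ t) * Q (s + 1)

lemma prod_Icc_eq_mul_prod_Icc_add_one {M : Type*} [CommMonoid M] (f : ℕ → M) {a b : ℕ}
    (hab : a ≤ b) : ∏ i ∈ Icc a b, f i = f a * ∏ i ∈ Icc (a + 1) b, f i := by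
  rw [← insert_Icc_add_one_left_eq_Icc hab, prod_insert (by simp)]

lemma sum_Icc_eq_add_sum_Icc_add_one {M : Type*} [AddCommMonoid M] (f : ℕ → M) {a b : ℕ}
    (hab : a ≤ b) : ∑ i ∈ Icc a b, f i = f a + ∑ i ∈ Icc (a + 1) b, f i := by
  rw [← insert_Icc_add_one_left_eq_Icc hab, sum_insert (by simp)]

lemma discountedTail_self (κ Q : ℕ → K) (T : ℕ) : discountedTail κ Q T T = 0 := by
  simp [discountedTail]

lemma discountedTail_eq_of_lt (κ Q : ℕ → K) {T j : ℕ} (hj : j < T) :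
    discountedTail κ Q T j = (κ j)⁻¹ * (Q (j + 1) + discountedTail κ Q T (j + 1)) := by
  rw [discountedTail, sum_Icc_eq_add_sum_Icc_add_one _ (show j + 1 ≤ T from hj), discountedTail,
    mul_add, mul_sum, Nat.add_sub_cancel, Icc_self, prod_singleton]
  congr 1
  refine sum_congr rfl fun s hs => ?_
  rw [prod_Icc_eq_mul_prod_Icc_add_one _ (by grind), mul_inv, mul_assoc]

lemma doublingSum_of_lt (κ Q : ℕ → K) {n j : ℕ} (hj : n < j) : doublingSum κ Q n j = 0 := by
  simp [doublingSum, hj]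

lemma doublingSum_eq_of_le (κ Q : ℕ → K) {n j : ℕ} (hj : j ≤ n) :
    doublingSum κ Q n j = (κ j)⁻¹ * (Q (j + 1) + 2 * doublingSum κ Q n (j + 1)) := by
  rw [doublingSum, sum_Icc_eq_add_sum_Icc_add_one _ hj, doublingSum, mul_add, Nat.sub_self,
    pow_zero, Icc_self, prod_singleton, one_div, mul_sum, mul_sum]
  congr 1
  refine sum_congr rfl fun s hs => ?_
  obtain ⟨hjs, -⟩ := mem_Icc.mp hs
  rw [prod_Icc_eq_mul_prod_Icc_add_one _ (by omega), show s - j = s - (j + 1) + 1 by omega,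
    pow_succ]
  field_simp

variable [LinearOrder K] [IsStrictOrderedRing K]

lemma discountedTail_le_doublingSum {κ Q Qd : ℕ → K} {m T : ℕ} (hT : 0 < T)
    (hκ : ∀ t ∈ Ico m T, 0 ≤ κ t)
    (hQ : ∀ t ∈ Ioc m T, Q t ≤ discountedTail κ Q T t + Qd t)
    {j : ℕ} (hmj : m ≤ j) (hjT : j ≤ T) :
    discountedTail κ Q T j ≤ doublingSum κ Qd (T - 1) j := by
  induction hjT using Nat.decreasingInduction with
  | self => rw [discountedTail_self, doublingSum_of_lt _ _ (by omega)]
  | of_succ k hkT ih =>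
    rw [discountedTail_eq_of_lt _ _ hkT, doublingSum_eq_of_le _ _ (by omega)]
    have hQk := hQ (k + 1) (mem_Ioc.mpr ⟨by omega, hkT⟩)
    have hS := ih (by omega)
    have hκk := hκ k (mem_Ico.mpr ⟨hmj, hkT⟩)
    exact mul_le_mul_of_nonneg_left (by linarith) (inv_nonneg.mpr hκk)

end BackwardRecursion

theorem stmt10_general (T : ℕ) (hT : 1 ≤ T) (Q Qd κ : ℕ → ℝ)
    (hκ : ∀ t, 1 ≤ t → t ≤ T - 1 → 0 < κ t ∧ κ t ≤ 1)
    (hbase : Q T = Qd T)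
    (hrec : ∀ k, 1 ≤ k → k ≤ T - 1 →
      Q (T - k) ≤ (∑ s ∈ Finset.Icc (T - k + 1) T,
        (∏ ℓ ∈ Finset.Icc (T - k) (s - 1), κ ℓ)⁻¹ * Q s) + Qd (T - k)) :
    Q 1 ≤ Qd 1 + ∑ s ∈ Finset.Icc 1 (T - 1),
      ((2 : ℝ) ^ (s - 1) / ∏ t ∈ Finset.Icc 1 s, κ t) * Qd (s + 1) := by
  have hstep : ∀ t ∈ Icc 1 T, Q t ≤ discountedTail κ Q T t + Qd t := by
    intro t ht
    obtain ⟨ht1, htT⟩ := mem_Icc.mp ht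
    rcases htT.lt_or_eq with htT | rfl
    · have := hrec (T - t) (by omega) (by omega)
      rwa [Nat.sub_sub_self htT.le] at this
    · rw [discountedTail_self, zero_add, hbase]
  have hκ_nonneg : ∀ t ∈ Ico 1 T, 0 ≤ κ t := fun t ht =>
    (hκ t (mem_Ico.mp ht).1 (by grind)).1.le
  calc Q 1 ≤ discountedTail κ Q T 1 + Qd 1 := hstep 1 (mem_Icc.mpr ⟨le_rfl, hT⟩)
    _ ≤ doublingSum κ Qd (T - 1) 1 + Qd 1 := by
      gcongr
      exact discountedTail_le_doublingSum hT hκ_nonneg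
        (fun t ht => hstep t (Ioc_subset_Icc_self ht)) le_rfl hT
    _ = _ := add_comm _ _

/-- Backward-induction recursion bound for the regret terms `ΔQ_t`. -/
theorem stmt10 (T : ℕ) (hT : 1 ≤ T) (Q Qd κ : ℕ → ℝ)
    (hQ : ∀ t, 1 ≤ t → t ≤ T → 0 ≤ Q t)
    (hQd : ∀ t, 1 ≤ t → t ≤ T → 0 ≤ Qd t)
    (hκ : ∀ t, 1 ≤ t → t ≤ T - 1 → 0 < κ t ∧ κ t ≤ 1)
    (hbase : Q T = Qd T)
    (hrec : ∀ k, 1 ≤ k → k ≤ T - 1 →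
      Q (T - k) ≤ (∑ s ∈ Finset.Icc (T - k + 1) T,
        (∏ ℓ ∈ Finset.Icc (T - k) (s - 1), κ ℓ)⁻¹ * Q s) + Qd (T - k)) :
    Q 1 ≤ Qd 1 + ∑ s ∈ Finset.Icc 1 (T - 1),
      ((2 : ℝ) ^ (s - 1) / ∏ t ∈ Finset.Icc 1 s, κ t) * Qd (s + 1) :=
  stmt10_general T hT Q Qd κ hκ hbase hrec
end
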